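/- arXiv:2004.11128 — 2 statements merged into one kernel-verified Lean document; each statement's English description precedes it below -/
import Mathlib

section
/- The weighted Euler curve is the pointwise sum over weight levels of ordinary Euler curves: for admissible g, χʷ_{p_v}(r) = Σ_{z≥1} χ_{p_v restricted to g⁻¹([z,∞))}(r), where χ_f(r) denotes the ordinary Euler characteristic of the sublevel complex f⁻¹((-∞,r]). Consequently, WECT_{K,g}(v,r) = Σ_{z≥1} ECT_{g⁻¹([z,∞))}(v,r). -/
open Finset
open scoped Classical

/-- Height of a simplex (given by its vertex set) in direction `v`:
the maximum of `⟪v, x⟫` over the vertices `x`. -/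
noncomputable def hght {d : ℕ} (v : EuclideanSpace ℝ (Fin d))
    (σ : Finset (EuclideanSpace ℝ (Fin d))) : ℝ :=
  sSup ((fun x => (inner ℝ v x : ℝ)) '' (σ : Set (EuclideanSpace ℝ (Fin d))))

/-- The weighted Euler curve value at `r`: weighted Euler characteristic of the
sublevel complex of the height filtration. -/
noncomputable def wec {d : ℕ} (K : Finset (Finset (EuclideanSpace ℝ (Fin d))))
    (g : Finset (EuclideanSpace ℝ (Fin d)) → ℕ)
    (v : EuclideanSpace ℝ (Fin d)) (r : ℝ) : ℤ :=
  ∑ σ ∈ K.filter (fun σ => hght v σ ≤ r), (-1 : ℤ) ^ (σ.card - 1) * (g σ : ℤ)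

/-! A weight `g σ = n` is the number of levels `z ∈ [1, n]`, i.e. the number of superlevel
complexes `g⁻¹([z, ∞))` containing `σ`; so the weighted count splits into one unweighted count
per level, and exchanging the two finite sums gives the identity. -/

theorem Finset.sum_nsmul_eq_sum_Icc_sum_filter_le {α M : Type*} [AddCommMonoid M]
    (s : Finset α) (g : α → ℕ) (f : α → M) {N : ℕ} (hN : ∀ x ∈ s, g x ≤ N) :
    ∑ x ∈ s, g x • f x = ∑ z ∈ Icc 1 N, ∑ x ∈ s with z ≤ g x, f x := by
  simp_rw [sum_filter]
  rw [sum_comm]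
  refine sum_congr rfl fun x hx => ?_
  have hlevels : {z ∈ Icc 1 N | z ≤ g x} = Icc 1 (g x) := by
    have := hN x hx
    ext z
    simp only [mem_filter, mem_Icc]
    omega
  rw [← sum_filter, hlevels, sum_const, Nat.card_Icc, add_tsub_cancel_right]

theorem wec_eq_sum_ect_general {d : ℕ}
    (K : Finset (Finset (EuclideanSpace ℝ (Fin d))))
    (g : Finset (EuclideanSpace ℝ (Fin d)) → ℕ)
    (v : EuclideanSpace ℝ (Fin d)) (r : ℝ) :
    wec K g v r =
      ∑ z ∈ Finset.Icc 1 (K.sup g),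
        ∑ σ ∈ K.filter (fun σ => z ≤ g σ ∧ hght v σ ≤ r),
          (-1 : ℤ) ^ (σ.card - 1) := by
  have hbound : ∀ σ ∈ K.filter (fun σ => hght v σ ≤ r), g σ ≤ K.sup g :=
    fun σ hσ => le_sup (mem_filter.1 hσ).1
  simp_rw [and_comm (a := _ ≤ g _), ← filter_filter]
  rw [← sum_nsmul_eq_sum_Icc_sum_filter_le _ g _ hbound, wec]
  simp_rw [nsmul_eq_mul, mul_comm]

/-- The weighted Euler curve is the sum over weight levels of the ordinary Euler
curves of the superlevel subcomplexes. -/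
theorem wec_eq_sum_ect {d : ℕ}
    (K : Finset (Finset (EuclideanSpace ℝ (Fin d))))
    (hne : ∀ σ ∈ K, σ.Nonempty)
    (hK : ∀ σ ∈ K, ∀ τ : Finset (EuclideanSpace ℝ (Fin d)),
      τ ⊆ σ → τ.Nonempty → τ ∈ K)
    (g : Finset (EuclideanSpace ℝ (Fin d)) → ℕ)
    (hpos : ∀ σ ∈ K, 1 ≤ g σ)
    (hadm : ∀ σ ∈ K, ∀ τ ∈ K, τ ⊆ σ → g σ ≤ g τ)
    (v : EuclideanSpace ℝ (Fin d)) (hv : ‖v‖ = 1) (r : ℝ) :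
    wec K g v r =
      ∑ z ∈ Finset.Icc 1 (K.sup g),
        ∑ σ ∈ K.filter (fun σ => z ≤ g σ ∧ hght v σ ≤ r),
          (-1 : ℤ) ^ (σ.card - 1) :=
  wec_eq_sum_ect_general K g v r
end

section
/- The WECT is equivariant under rotations: if R ∈ SO(d) and (K,g) is a weighted simplicial complex in ℝ^d, then for the rotated complex RK (with weight g∘R⁻¹ on rotated simplices) one has WECT_{RK, g∘R⁻¹}(v, r) = WECT_{K,g}(R⁻¹v, r) for all v ∈ S^{d-1}, r ∈ ℝ. -/
open Finset
open scoped Classical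

theorem hght_image_linearIsometryEquiv {d : ℕ}
    (R : EuclideanSpace ℝ (Fin d) ≃ₗᵢ[ℝ] EuclideanSpace ℝ (Fin d))
    (v : EuclideanSpace ℝ (Fin d)) (σ : Finset (EuclideanSpace ℝ (Fin d))) :
    hght v (σ.image R) = hght (R.symm v) σ := by
  unfold hght
  rw [Finset.coe_image, Set.image_image]
  congr 1
  refine Set.image_congr fun x _ => ?_
  rw [← R.inner_map_map (R.symm v) x, R.apply_symm_apply]

theorem wect_rotation_equivariant_general {d : ℕ}
    (K : Finset (Finset (EuclideanSpace ℝ (Fin d))))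
    (g : Finset (EuclideanSpace ℝ (Fin d)) → ℕ)
    (R : EuclideanSpace ℝ (Fin d) ≃ₗᵢ[ℝ] EuclideanSpace ℝ (Fin d))
    (v : EuclideanSpace ℝ (Fin d)) (r : ℝ) :
    wec (K.image (fun σ => σ.image R))
      (fun τ => g (τ.image R.symm)) v r
      = wec K g (R.symm v) r := by
  unfold wec
  rw [Finset.filter_image,
    Finset.sum_image fun _ _ _ _ h => Finset.image_injective R.injective h]
  refine Finset.sum_congr ?_ fun σ _ => ?_
  · simp only [hght_image_linearIsometryEquiv]
  · simp only [Finset.card_image_of_injective _ R.injective, Finset.image_image,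
      R.symm_comp_self, Finset.image_id]

/-- Rotation equivariance of the WECT. -/
theorem wect_rotation_equivariant {d : ℕ}
    (K : Finset (Finset (EuclideanSpace ℝ (Fin d))))
    (hne : ∀ σ ∈ K, σ.Nonempty)
    (g : Finset (EuclideanSpace ℝ (Fin d)) → ℕ)
    (R : EuclideanSpace ℝ (Fin d) ≃ₗᵢ[ℝ] EuclideanSpace ℝ (Fin d))
    (v : EuclideanSpace ℝ (Fin d)) (hv : ‖v‖ = 1) (r : ℝ) :
    wec (K.image (fun σ => σ.image R))
      (fun τ => g (τ.image R.symm)) v r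
      = wec K g (R.symm v) r :=
  wect_rotation_equivariant_general K g R v r
end
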